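/- arXiv:0709.3596 — 3 statements merged into one kernel-verified Lean document; each statement's English description precedes it below -/
import Mathlib

section
/- Let σ be a Borel measure on (0,∞) and let u ∈ 𝔇_1 with h_u < ∞. Then there exists a gauge function ū ∈ 𝔇_1 such that ū ≺ u (that is, ū/u tends monotonically to infinity at 0) and h_{ū} = h_u. -/
open MeasureTheory Filter Set Topology
open scoped ENNReal NNReal Classical

noncomputable section

namespace LevyFractal

/-! ### Gauge functions -/

/-- The class `𝔇` of gauge functions: nondecreasing near `0`, vanishing and
(right-)continuous at `0`. -/
def IsGauge (g : ℝ → ℝ) : Prop :=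
  g 0 = 0 ∧ Tendsto g (𝓝[>] (0:ℝ)) (𝓝 0) ∧ ∃ ε > 0, MonotoneOn g (Icc (0:ℝ) ε)

/-- The class `𝔇₁`: gauge functions such that `r ↦ g r / r` is positive and
nonincreasing near `0`. -/
def IsGauge1 (g : ℝ → ℝ) : Prop :=
  IsGauge g ∧ ∃ ε > 0, (∀ r ∈ Ioc (0:ℝ) ε, 0 < g r / r) ∧
    AntitoneOn (fun r => g r / r) (Ioc (0:ℝ) ε)

/-- The gauge function `g₁ : r ↦ r * inf_{0 < ρ ≤ r} g ρ / ρ`. -/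
def gOne (g : ℝ → ℝ) : ℝ → ℝ :=
  fun r => r * sInf ((fun ρ => g ρ / ρ) '' Ioc (0:ℝ) r)

/-- `GaugePrec gb g` means `gb ≺ g`: the quotient `gb/g` tends monotonically to
infinity at `0`. -/
def GaugePrec (gb g : ℝ → ℝ) : Prop :=
  ∃ ε > 0, AntitoneOn (fun r => gb r / g r) (Ioc (0:ℝ) ε) ∧
    Tendsto (fun r => gb r / g r) (𝓝[>] (0:ℝ)) atTop

/-- The Hausdorff `g`-measure associated with a gauge function `g`. -/
def hausdorffGauge {X : Type*} [EMetricSpace X] [MeasurableSpace X] [BorelSpace X]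
    (g : ℝ → ℝ) : Measure X :=
  Measure.mkMetric (fun r => ENNReal.ofReal (g r.toReal))

/-- Membership in the class `𝒟`: `log (g₁ r) / log r` has a limit as `r → 0⁺`
(equivalently, its liminf and limsup at `0⁺` coincide). -/
def MemD (g : ℝ → ℝ) : Prop :=
  ∃ γ : ℝ, Tendsto (fun r => Real.log (gOne g r) / Real.log r) (𝓝[>] (0:ℝ)) (𝓝 γ)

/-- The class `𝒟₁ = 𝒟 ∩ 𝔇₁`. -/
def MemD1 (g : ℝ → ℝ) : Prop := MemD g ∧ IsGauge1 g

/-! ### Net measures and classes of sets with large intersection -/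

/-- The `c`-adic interval `c^{-j} (k + [0,1))`. -/
def cadicInt (c : ℕ) (j k : ℤ) : Set ℝ :=
  Ico ((k : ℝ) * (c:ℝ) ^ (-j)) (((k : ℝ) + 1) * (c:ℝ) ^ (-j))

/-- `ε_g`: the supremum of the `ε ∈ (0,1]` such that `g` is nondecreasing on `[0,ε]`
and `g r / r` is nonincreasing on `(0,ε]`. -/
def epsGauge (g : ℝ → ℝ) : ℝ :=
  sSup {ε : ℝ | ε ∈ Ioc (0:ℝ) 1 ∧ MonotoneOn g (Icc 0 ε) ∧
    AntitoneOn (fun r => g r / r) (Ioc 0 ε)}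

/-- The set coded by an element of `Option (ℤ × ℤ)`: either the empty set, or a
`c`-adic interval. -/
def netSet (c : ℕ) : Option (ℤ × ℤ) → Set ℝ
  | none => ∅
  | some (j, k) => cadicInt c j k

/-- The weight `g (diam λ)` of a coded `c`-adic interval. -/
def netWeight (c : ℕ) (g : ℝ → ℝ) : Option (ℤ × ℤ) → ℝ≥0∞
  | none => 0
  | some (j, _) => ENNReal.ofReal (g ((c:ℝ) ^ (-j)))

/-- The outer net measure `M^g_∞` built from coverings by `c`-adic intervals of
diameter less than `ε_g` (and the empty set). -/
def netMeasure (c : ℕ) (g : ℝ → ℝ) (F : Set ℝ) : ℝ≥0∞ :=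
  ⨅ (f : ℕ → Option (ℤ × ℤ))
    (_ : ∀ p j k, f p = some (j, k) → (c:ℝ) ^ (-j) < epsGauge g)
    (_ : F ⊆ ⋃ p, netSet c (f p)),
      ∑' p, netWeight c g (f p)

/-- The class `G^g(V)` of subsets of `ℝ` with large intersection in `V` with
respect to `g`: the `G_δ`-sets `F` such that `M^{ḡ}_∞(F ∩ U) = M^{ḡ}_∞(U)` for every
`ḡ ∈ 𝔇₁` with `ḡ ≺ g` and every open `U ⊆ V`. -/
def largeIntersection (g : ℝ → ℝ) (V : Set ℝ) : Set (Set ℝ) :=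
  {F | IsGδ F ∧ ∀ gb : ℝ → ℝ, IsGauge1 gb → GaugePrec gb g →
    ∀ U : Set ℝ, IsOpen U → U ⊆ V → netMeasure 2 gb (F ∩ U) = netMeasure 2 gb U}

/-! ### Lévy processes -/

variable {d : ℕ}

/-- `X` is a `d`-dimensional Lévy process on the probability space `(Ω, P)`, with
generating triplet `(a, Q, π)` (drift, positive semidefinite quadratic form given by the
symmetric bilinear map `Q`, and Lévy measure `π`). -/
structure IsLevyProcess {Ω : Type*} [MeasurableSpace Ω] (P : Measure Ω)
    (X : ℝ → Ω → (Fin d → ℝ)) (a : Fin d → ℝ) (Q : (Fin d → ℝ) → (Fin d → ℝ) → ℝ)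
    (π : Measure (Fin d → ℝ)) : Prop where
  isProb : IsProbabilityMeasure P
  meas : ∀ t, Measurable (X t)
  init : ∀ ω, X 0 ω = 0
  stationary : ∀ s t : ℝ, 0 ≤ s → s ≤ t →
    P.map (fun ω => X t ω - X s ω) = P.map (X (t - s))
  indepIncrements : ∀ (n : ℕ) (t : ℕ → ℝ), 0 ≤ t 0 → Monotone t →
    ProbabilityTheory.iIndepFun
      (fun i ω => X (t (i + 1)) ω - X (t i) ω) P
  cadlag : ∀ᵐ ω ∂P,
    (∀ t : ℝ, 0 ≤ t → ContinuousWithinAt (fun u => X u ω) (Ici t) t) ∧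
    (∀ t : ℝ, 0 < t → ∃ L, Tendsto (fun u => X u ω) (𝓝[<] t) (𝓝 L))
  Q_symm : ∀ x y, Q x y = Q y x
  Q_add : ∀ x x' y, Q (x + x') y = Q x y + Q x' y
  Q_smul : ∀ (c : ℝ) (x y), Q (c • x) y = c * Q x y
  Q_nonneg : ∀ x, 0 ≤ Q x x
  levyMeasure_zero : π {0} = 0
  levyMeasure_finite : ∫⁻ x, ENNReal.ofReal (min 1 (‖x‖ ^ 2)) ∂π < ∞
  levyKhintchine : ∀ t : ℝ, 0 ≤ t → ∀ lam : Fin d → ℝ,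
    ∫ ω, Complex.exp (Complex.I * ((∑ i, lam i * X t ω i : ℝ) : ℂ)) ∂P
      = Complex.exp (-(t : ℂ) *
          (Complex.I * ((∑ i, a i * lam i : ℝ) : ℂ) + ((Q lam lam : ℝ) : ℂ) / 2
            + ∫ x, (1 - Complex.exp (Complex.I * ((∑ i, lam i * x i : ℝ) : ℂ))
                + Complex.I * ((∑ i, lam i * x i : ℝ) : ℂ)
                  * ((if ‖x‖ < 1 then (1:ℝ) else 0) : ℂ)) ∂π))

variable {Ω : Type*} [MeasurableSpace Ω]

/-- The jump `ΔX_t = X_t - X_{t⁻}` of the path of `X` under `ω` at time `t`. -/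
def jump (X : ℝ → Ω → (Fin d → ℝ)) (ω : Ω) (t : ℝ) : Fin d → ℝ :=
  X t ω - Function.leftLim (fun u => X u ω) t

/-- The set `S` of jump times. -/
def jumpTimes (X : ℝ → Ω → (Fin d → ℝ)) (ω : Ω) : Set ℝ :=
  {t | 0 < t ∧ jump X ω t ≠ 0}

/-- The set `S₁` of times of jumps of size at most `1`. -/
def smallJumpTimes (X : ℝ → Ω → (Fin d → ℝ)) (ω : Ω) : Set ℝ :=
  {t | t ∈ jumpTimes X ω ∧ ‖jump X ω t‖ ≤ 1}

/-- The measure `σ`, image of the Lévy measure `π` under `x ↦ ‖x‖`. -/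
def sigmaOf (π : Measure (Fin d → ℝ)) : Measure ℝ := π.map fun x => ‖x‖

/-- `c_j = σ((2^{-j-1}, 2^{-j}])`. -/
def cSeq (π : Measure (Fin d → ℝ)) (j : ℕ) : ℝ :=
  (sigmaOf π (Ioc ((2:ℝ) ^ (-(j:ℤ) - 1)) ((2:ℝ) ^ (-(j:ℤ))))).toReal

/-- Condition (C): `Σ_j 2^{-j} √(c_j log(1 + c_j)) < ∞`. -/
def ConditionC (π : Measure (Fin d → ℝ)) : Prop :=
  Summable fun j : ℕ =>
    (2:ℝ) ^ (-(j:ℝ)) * Real.sqrt (cSeq π j * Real.log (1 + cSeq π j))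

/-- The Blumenthal–Getoor exponent `β`. -/
def betaIndex (π : Measure (Fin d → ℝ)) : ℝ :=
  sInf {γ : ℝ | 0 ≤ γ ∧
    ∫⁻ r in Ioc (0:ℝ) 1, ENNReal.ofReal (r ^ γ) ∂(sigmaOf π) < ∞}

/-- The exponent `β′`: `β` if the Gaussian part vanishes, `2` otherwise. -/
def betaPrime (π : Measure (Fin d → ℝ)) (Q : (Fin d → ℝ) → (Fin d → ℝ) → ℝ) : ℝ :=
  if ∀ x, Q x x = 0 then betaIndex π else 2

/-- The Hölder exponent of `f : ℝ → ℝ^d` at `t` (restricted to nonnegative times),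
with values in `[0,∞]`. -/
def holderExp (f : ℝ → (Fin d → ℝ)) (t : ℝ) : ℝ≥0∞ :=
  sSup {H : ℝ≥0∞ | ∃ h : ℝ, 0 < h ∧ H = ENNReal.ofReal h ∧
    ∃ c > 0, ∃ P : Fin d → Polynomial ℝ, ∃ δ > 0, ∀ t' : ℝ, 0 ≤ t' → |t' - t| ≤ δ →
      ‖f t' - fun i => (P i).eval (t' - t)‖ ≤ c * |t' - t| ^ h}

/-- The iso-Hölder set `E_h = {t ≥ 0 : h_X(t) = h}`. -/
def Eset (X : ℝ → Ω → (Fin d → ℝ)) (ω : Ω) (h : ℝ≥0∞) : Set ℝ :=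
  {t | 0 ≤ t ∧ holderExp (fun u => X u ω) t = h}

/-- The singularity set `Ẽ_h = {t ∈ [0,∞) ∖ S : h_X(t) ≤ h}`. -/
def tildeEset (X : ℝ → Ω → (Fin d → ℝ)) (ω : Ω) (h : ℝ≥0∞) : Set ℝ :=
  {t | 0 ≤ t ∧ t ∉ jumpTimes X ω ∧ holderExp (fun u => X u ω) t ≤ h}

/-- The set `L_φ` of points approximated at rate `φ` by the jump times in `S₁`. -/
def Lset (X : ℝ → Ω → (Fin d → ℝ)) (ω : Ω) (φ : ℝ → ℝ) : Set ℝ :=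
  {t | 0 ≤ t ∧ {s | s ∈ smallJumpTimes X ω ∧ |t - s| < φ (‖jump X ω s‖)}.Infinite}

/-- `h_g` computed directly from `g`:
`inf {h > 0 : ∫_{(0,ε]} g(r^{1/h}) σ(dr) = ∞ for all small enough ε}` (with `inf ∅ = ∞`). -/
def hGaugeRaw (σ : Measure ℝ) (g : ℝ → ℝ) : ℝ≥0∞ :=
  sInf {H : ℝ≥0∞ | ∃ h : ℝ, 0 < h ∧ H = ENNReal.ofReal h ∧
    ∃ ε₀ > 0, ∀ ε : ℝ, 0 < ε → ε ≤ ε₀ →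
      ∫⁻ r in Ioc (0:ℝ) ε, ENNReal.ofReal (g (r ^ (1 / h))) ∂σ = ∞}

/-- `h_g`, computed from `g₁` as in the paper. -/
def hGauge (σ : Measure ℝ) (g : ℝ → ℝ) : ℝ≥0∞ := hGaugeRaw σ (gOne g)

/-- The class `𝔚` of moduli of continuity. -/
def IsModulus (w : ℝ → ℝ) : Prop :=
  w 0 = 0 ∧ (∃ ε > 0, StrictMonoOn w (Icc (0:ℝ) ε) ∧ ContinuousOn w (Icc (0:ℝ) ε)) ∧
  (∃ c : ℝ, 1 < c ∧ ∀ᶠ δ in 𝓝[>] (0:ℝ), c * w δ ≤ w (2 * δ)) ∧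
  (∃ C : ℝ, ∀ᶠ δ in 𝓝[>] (0:ℝ), w (2 * δ) ≤ C * w δ)

/-- `w` is a modulus of continuity of `X(ω)` at time `t`. -/
def IsPtwiseModulusAt (X : ℝ → Ω → (Fin d → ℝ)) (ω : Ω) (w : ℝ → ℝ) (t : ℝ) : Prop :=
  ∃ c > 0, ∃ P : Fin d → Polynomial ℝ, ∃ δ > 0, ∀ t' : ℝ, 0 ≤ t' → |t' - t| ≤ δ →
    ‖X t' ω - fun i => (P i).eval (t' - t)‖ ≤ c * w |t' - t|

/-- `F_w`: the set of nonnegative non-jump times at which `w` is not a modulus of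
continuity of `X`. -/
def badModulusSet (X : ℝ → Ω → (Fin d → ℝ)) (ω : Ω) (w : ℝ → ℝ) : Set ℝ :=
  {t | 0 ≤ t ∧ t ∉ jumpTimes X ω ∧ ¬ IsPtwiseModulusAt X ω w t}

/-!
Put `ū = Ψ ∘ u` with `Ψ t = ⨅ n, max ((n + 1) t) (c n)` for a sequence `c n > 0` tending to `0`.
Whatever `c` is, `Ψ t ≥ t` and `Ψ t / t` increases to `∞` as `t ↓ 0`; hence `ū ∈ 𝔇₁`, `ū ≺ u`, and
`h_ū ≤ h_u`. Choosing `c n → 0` fast enough (a diagonal, de la Vallée-Poussin type choice),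
`Ψ ∘ g` stays integrable for each of the countably many integrable
`g = u(·^{1/q})` on `(0, ε]`, `q, ε ∈ ℚ`. So if the `ū`-integral diverges at `h`, then the
`u`-integral diverges at every rational `q > h`: otherwise `ū` would be integrable at `q`, hence,
`ū` being nondecreasing and `r ^ (1 / h) ≤ r ^ (1 / q)` for `r ≤ 1`, at `h`. This gives `h_u ≤ h_ū`.
-/

def superlinearEnvelope (c : ℕ → ℝ) (t : ℝ) : ℝ :=
  ⨅ n : ℕ, max ((n + 1) * t) (c n)

section SuperlinearEnvelope

variable {c : ℕ → ℝ}

lemma superlinearEnvelope_le (hc : ∀ n, 0 ≤ c n) (t : ℝ) (n : ℕ) :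
    superlinearEnvelope c t ≤ max ((n + 1) * t) (c n) :=
  ciInf_le ⟨0, by rintro _ ⟨m, rfl⟩; exact (hc m).trans (le_max_right _ _)⟩ n

lemma superlinearEnvelope_nonneg (hc : ∀ n, 0 ≤ c n) (t : ℝ) : 0 ≤ superlinearEnvelope c t :=
  le_ciInf fun n => (hc n).trans (le_max_right _ _)

lemma le_superlinearEnvelope (hc : ∀ n, 0 ≤ c n) (t : ℝ) : t ≤ superlinearEnvelope c t := by
  rcases le_total t 0 with ht | ht
  · exact ht.trans (superlinearEnvelope_nonneg hc t)
  · exact le_ciInf fun n => le_max_of_le_left (le_mul_of_one_le_left ht (by simp))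

lemma monotone_superlinearEnvelope (hc : ∀ n, 0 ≤ c n) : Monotone (superlinearEnvelope c) :=
  fun s t hst => le_ciInf fun n => (superlinearEnvelope_le hc s n).trans
    (max_le_max (mul_le_mul_of_nonneg_left hst (by positivity)) le_rfl)

lemma ofReal_superlinearEnvelope_le (hc : ∀ n, 0 ≤ c n) (t : ℝ) (n : ℕ) :
    ENNReal.ofReal (superlinearEnvelope c t) ≤
      ENNReal.ofReal (n + 1) * ENNReal.ofReal t + ENNReal.ofReal (c n) :=
  calc ENNReal.ofReal (superlinearEnvelope c t)
      ≤ max (ENNReal.ofReal ((n + 1) * t)) (ENNReal.ofReal (c n)) := by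
        rw [← ENNReal.ofReal_max]; exact ENNReal.ofReal_le_ofReal (superlinearEnvelope_le hc t n)
    _ ≤ _ := by
        rw [ENNReal.ofReal_mul (by positivity)]
        exact max_le_add_of_nonneg (by simp) (by simp)

lemma superlinearEnvelope_of_nonpos (hc : ∀ n, 0 ≤ c n) (hc0 : Tendsto c atTop (𝓝 0)) {t : ℝ}
    (ht : t ≤ 0) : superlinearEnvelope c t = 0 := by
  refine le_antisymm (ge_of_tendsto hc0 (Eventually.of_forall fun n => ?_))
    (superlinearEnvelope_nonneg hc t)
  refine (superlinearEnvelope_le hc t n).trans_eq (max_eq_right ?_)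
  exact (mul_nonpos_of_nonneg_of_nonpos (by positivity) ht).trans (hc n)

lemma tendsto_superlinearEnvelope (hc : ∀ n, 0 ≤ c n) (hc0 : Tendsto c atTop (𝓝 0)) :
    Tendsto (superlinearEnvelope c) (𝓝 0) (𝓝 0) := by
  refine tendsto_order.2 ⟨fun a ha => Eventually.of_forall fun t =>
    ha.trans_le (superlinearEnvelope_nonneg hc t), fun a ha => ?_⟩
  obtain ⟨n, hn⟩ := (hc0.eventually (gt_mem_nhds ha)).exists
  have hlin : Tendsto (fun t : ℝ => (n + 1) * t) (𝓝 0) (𝓝 0) := by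
    simpa using (tendsto_id (x := 𝓝 (0:ℝ))).const_mul ((n : ℝ) + 1)
  filter_upwards [hlin.eventually (gt_mem_nhds ha)] with t ht
  exact (superlinearEnvelope_le hc t n).trans_lt (max_lt ht hn)

lemma antitoneOn_superlinearEnvelope_div (hc : ∀ n, 0 ≤ c n) :
    AntitoneOn (fun t => superlinearEnvelope c t / t) (Ioi 0) := by
  intro s (hs : 0 < s) t (ht : 0 < t) hst
  have key : ∀ n : ℕ, superlinearEnvelope c t * (s / t) ≤ max ((n + 1) * s) (c n) := fun n =>
    calc superlinearEnvelope c t * (s / t) ≤ max ((n + 1) * t) (c n) * (s / t) :=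
          mul_le_mul_of_nonneg_right (superlinearEnvelope_le hc t n) (by positivity)
      _ = max ((n + 1) * s) (c n * (s / t)) := by
          rw [max_mul_of_nonneg _ _ (by positivity)]; field_simp
      _ ≤ max ((n + 1) * s) (c n) :=
          max_le_max le_rfl (mul_le_of_le_one_right (hc n) ((div_le_one ht).2 hst))
  calc superlinearEnvelope c t / t = superlinearEnvelope c t * (s / t) / s := by field_simp
    _ ≤ superlinearEnvelope c s / s := div_le_div_of_nonneg_right (le_ciInf key) hs.le

lemma tendsto_superlinearEnvelope_div_atTop (hc : ∀ n, 0 < c n) :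
    Tendsto (fun t => superlinearEnvelope c t / t) (𝓝[>] 0) atTop := by
  refine tendsto_atTop.2 fun b => ?_
  obtain ⟨N, hN⟩ := exists_nat_ge b
  have hlin : Tendsto (fun t : ℝ => N * t) (𝓝[>] 0) (𝓝 0) := by
    simpa using ((tendsto_id (x := 𝓝 (0:ℝ))).const_mul (N : ℝ)).mono_left nhdsWithin_le_nhds
  have hsmall : ∀ᶠ t in 𝓝[>] 0, ∀ n ∈ Finset.range N, N * t ≤ c n :=
    (eventually_all_finset _).2 fun n _ => (hlin.eventually (gt_mem_nhds (hc n))).mono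
      fun _ h => h.le
  filter_upwards [hsmall, self_mem_nhdsWithin] with t hNt (ht : 0 < t)
  rw [le_div_iff₀ ht]
  refine le_ciInf fun n => (mul_le_mul_of_nonneg_right hN ht.le).trans ?_
  rcases lt_or_ge n N with hn | hn
  · exact le_max_of_le_right (hNt n (Finset.mem_range.2 hn))
  · exact le_max_of_le_left
      (mul_le_mul_of_nonneg_right (by exact_mod_cast hn.trans n.le_succ) ht.le)

end SuperlinearEnvelope

lemma IsGauge.exists_monotone_eventuallyEq {u : ℝ → ℝ} (hu : IsGauge u) :
    ∃ v : ℝ → ℝ, Monotone v ∧ v =ᶠ[𝓝[>] 0] u := by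
  obtain ⟨-, -, ε, hε, hmono⟩ := hu
  have h0 : (0 : ℝ) ∈ Icc 0 ε := ⟨le_rfl, hε.le⟩
  have hε' : ε ∈ Icc 0 ε := ⟨hε.le, le_rfl⟩
  obtain ⟨v, hv, heq⟩ := hmono.exists_monotone_extension
    ⟨u 0, by rintro _ ⟨x, hx, rfl⟩; exact hmono h0 hx hx.1⟩
    ⟨u ε, by rintro _ ⟨x, hx, rfl⟩; exact hmono hx hε' hx.2⟩
  exact ⟨v, hv, eventually_of_mem (Ioc_mem_nhdsGT hε)
    fun x hx => (heq (Ioc_subset_Icc_self hx)).symm⟩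

lemma IsGauge1.exists_pos_monotoneOn {u : ℝ → ℝ} (hu : IsGauge1 u) :
    ∃ δ > 0, MonotoneOn u (Ioc 0 δ) ∧ (∀ r ∈ Ioc (0:ℝ) δ, 0 < u r) ∧
      AntitoneOn (fun r => u r / r) (Ioc 0 δ) := by
  obtain ⟨⟨-, -, ε₁, hε₁, hmono⟩, ε₂, hε₂, hpos, hanti⟩ := hu
  have hsub₂ : Ioc 0 (min ε₁ ε₂) ⊆ Ioc 0 ε₂ := Ioc_subset_Ioc_right (min_le_right _ _)
  refine ⟨min ε₁ ε₂, lt_min hε₁ hε₂,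
    hmono.mono (Ioc_subset_Icc_self.trans (Icc_subset_Icc_right (min_le_left _ _))),
    fun r hr => ?_, hanti.mono hsub₂⟩
  exact (div_pos_iff_of_pos_right hr.1).1 (hpos r (hsub₂ hr))

section Composition

variable {c : ℕ → ℝ} {u : ℝ → ℝ}

lemma antitoneOn_superlinearEnvelope_comp_div {s : Set ℝ} (hc : ∀ n, 0 ≤ c n)
    (hu : MonotoneOn u s) (hpos : ∀ r ∈ s, 0 < u r) :
    AntitoneOn (fun r => superlinearEnvelope c (u r) / u r) s :=
  fun _ ha _ hb hab => antitoneOn_superlinearEnvelope_div hc (hpos _ ha) (hpos _ hb) (hu ha hb hab)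

lemma IsGauge1.superlinearEnvelope_comp (hu : IsGauge1 u) (hc : ∀ n, 0 < c n)
    (hc0 : Tendsto c atTop (𝓝 0)) : IsGauge1 (superlinearEnvelope c ∘ u) := by
  have hc' : ∀ n, 0 ≤ c n := fun n => (hc n).le
  obtain ⟨δ, hδ, hmono, hpos, hanti⟩ := hu.exists_pos_monotoneOn
  obtain ⟨⟨hu0, hulim, ε, hε, hmono'⟩, -⟩ := hu
  have hratio := antitoneOn_superlinearEnvelope_comp_div hc' hmono hpos
  have hfactor : ∀ r ∈ Ioc 0 δ, superlinearEnvelope c (u r) / r =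
      superlinearEnvelope c (u r) / u r * (u r / r) := fun r hr => by
    field_simp [(hpos r hr).ne']
  refine ⟨⟨by simp [hu0, superlinearEnvelope_of_nonpos hc' hc0],
    (tendsto_superlinearEnvelope hc' hc0).comp hulim, ε, hε,
    (monotone_superlinearEnvelope hc').comp_monotoneOn hmono'⟩, δ, hδ, fun r hr => ?_, ?_⟩
  · exact div_pos ((hpos r hr).trans_le (le_superlinearEnvelope hc' _)) hr.1
  · intro a ha b hb hab
    simp only [Function.comp_apply, hfactor a ha, hfactor b hb]
    exact mul_le_mul (hratio ha hb hab) (hanti ha hb hab) (div_pos (hpos b hb) hb.1).le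
      (div_pos ((hpos a ha).trans_le (le_superlinearEnvelope hc' _)) (hpos a ha)).le

lemma IsGauge1.gaugePrec_superlinearEnvelope_comp (hu : IsGauge1 u) (hc : ∀ n, 0 < c n) :
    GaugePrec (superlinearEnvelope c ∘ u) u := by
  obtain ⟨δ, hδ, hmono, hpos, -⟩ := hu.exists_pos_monotoneOn
  have hu_pos : Tendsto u (𝓝[>] 0) (𝓝[>] 0) := tendsto_nhdsWithin_iff.2
    ⟨hu.1.2.1, eventually_of_mem (Ioc_mem_nhdsGT hδ) hpos⟩
  exact ⟨δ, hδ, antitoneOn_superlinearEnvelope_comp_div (fun n => (hc n).le) hmono hpos,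
    (tendsto_superlinearEnvelope_div_atTop hc).comp hu_pos⟩

end Composition

def GaugeIntegralConverges (σ : Measure ℝ) (g : ℝ → ℝ) (h : ℝ) : Prop :=
  ∃ ε > 0, ∫⁻ r in Ioc (0:ℝ) ε, ENNReal.ofReal (g (r ^ (1 / h))) ∂σ < ∞

section Exponent

variable {σ : Measure ℝ} {g g' : ℝ → ℝ} {h h' : ℝ}

lemma GaugeIntegralConverges.mono (hle : ∀ᶠ x in 𝓝[>] 0, g x ≤ g' x) (hh : 0 < h)
    (hg' : GaugeIntegralConverges σ g' h) : GaugeIntegralConverges σ g h := by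
  obtain ⟨ε, hε, hfin⟩ := hg'
  obtain ⟨δ, hδ, hsub⟩ := mem_nhdsGT_iff_exists_Ioc_subset.1 hle
  have hδh : 0 < δ ^ h := Real.rpow_pos_of_pos hδ h
  refine ⟨min ε (δ ^ h), lt_min hε hδh, lt_of_le_of_lt ?_ hfin⟩
  calc ∫⁻ r in Ioc 0 (min ε (δ ^ h)), ENNReal.ofReal (g (r ^ (1 / h))) ∂σ
      ≤ ∫⁻ r in Ioc 0 (min ε (δ ^ h)), ENNReal.ofReal (g' (r ^ (1 / h))) ∂σ := by
        refine setLIntegral_mono' measurableSet_Ioc fun r hr => ENNReal.ofReal_le_ofReal (hsub ?_)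
        refine ⟨Real.rpow_pos_of_pos hr.1 _, ?_⟩
        calc r ^ (1 / h) ≤ (δ ^ h) ^ (1 / h) :=
              Real.rpow_le_rpow hr.1.le (hr.2.trans (min_le_right _ _)) (by positivity)
          _ = δ := by rw [one_div, Real.rpow_rpow_inv hδ.le hh.ne']
    _ ≤ _ := lintegral_mono_set (Ioc_subset_Ioc_right (min_le_left _ _))

lemma GaugeIntegralConverges.of_exponent_le (hg : Monotone g) (hh : 0 < h) (hhh' : h ≤ h')
    (hg' : GaugeIntegralConverges σ g h') : GaugeIntegralConverges σ g h := by
  obtain ⟨ε, hε, hfin⟩ := hg'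
  refine ⟨min ε 1, lt_min hε one_pos, lt_of_le_of_lt ?_ hfin⟩
  calc ∫⁻ r in Ioc 0 (min ε 1), ENNReal.ofReal (g (r ^ (1 / h))) ∂σ
      ≤ ∫⁻ r in Ioc 0 (min ε 1), ENNReal.ofReal (g (r ^ (1 / h'))) ∂σ :=
        setLIntegral_mono' measurableSet_Ioc fun r hr => ENNReal.ofReal_le_ofReal (hg
          (Real.rpow_le_rpow_of_exponent_ge hr.1 (hr.2.trans (min_le_right _ _))
            (one_div_le_one_div_of_le hh hhh')))
    _ ≤ _ := lintegral_mono_set (Ioc_subset_Ioc_right (min_le_left _ _))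

-- Divergence on every small `(0, ε]` is the same as divergence on all of them, since the
-- integral is monotone in `ε`.
lemma hGaugeRaw_eq_sInf (σ : Measure ℝ) (g : ℝ → ℝ) :
    hGaugeRaw σ g =
      sInf (ENNReal.ofReal '' {h | 0 < h ∧ ¬ GaugeIntegralConverges σ g h}) := by
  have hdiv : ∀ h, (∃ ε₀ > 0, ∀ ε : ℝ, 0 < ε → ε ≤ ε₀ →
      ∫⁻ r in Ioc (0:ℝ) ε, ENNReal.ofReal (g (r ^ (1 / h))) ∂σ = ∞) ↔
      ¬ GaugeIntegralConverges σ g h := by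
    refine fun h => ⟨fun ⟨ε₀, hε₀, hinf⟩ ⟨ε, hε, hfin⟩ => ?_,
      fun hnot => ⟨1, one_pos, fun ε hε _ => not_lt_top_iff.1 fun hlt => hnot ⟨ε, hε, hlt⟩⟩⟩
    have := (lintegral_mono_set (μ := σ) (f := fun r => ENNReal.ofReal (g (r ^ (1 / h))))
      (Ioc_subset_Ioc_right (min_le_left ε ε₀))).trans_lt hfin
    rw [hinf _ (lt_min hε hε₀) (min_le_right _ _)] at this
    exact lt_irrefl _ this
  unfold hGaugeRaw
  congr 1
  ext H
  simp only [hdiv, mem_ofPred_eq, mem_image]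
  exact ⟨fun ⟨h, hh, hH, hn⟩ => ⟨h, ⟨hh, hn⟩, hH.symm⟩,
    fun ⟨h, ⟨hh, hn⟩, hH⟩ => ⟨h, hh, hH.symm, hn⟩⟩

lemma sInf_image_ofReal_eq {S T : Set ℝ} (hST : S ⊆ T) (hTS : ∀ h ∈ T, ∀ h' > h, h' ∈ S) :
    sInf (ENNReal.ofReal '' S) = sInf (ENNReal.ofReal '' T) := by
  refine le_antisymm (le_sInf ?_) (sInf_le_sInf (image_mono hST))
  rintro _ ⟨h, hT, rfl⟩
  refine ENNReal.le_of_forall_pos_le_add fun ε hε _ => ?_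
  calc sInf (ENNReal.ofReal '' S) ≤ ENNReal.ofReal (h + ε) :=
        sInf_le (mem_image_of_mem _ (hTS h hT _ (lt_add_of_pos_right h hε)))
    _ ≤ ENNReal.ofReal h + ε := by
        simpa only [ENNReal.ofReal_coe_nnreal] using ENNReal.ofReal_add_le (p := h) (q := ε)

lemma hGaugeRaw_congr (hgg' : g =ᶠ[𝓝[>] 0] g') : hGaugeRaw σ g = hGaugeRaw σ g' := by
  simp only [hGaugeRaw_eq_sInf]
  congr 2
  ext h
  exact and_congr_right fun hh =>
    not_congr ⟨(·.mono hgg'.symm.le hh), (·.mono hgg'.le hh)⟩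

lemma hGaugeRaw_eq_of_le (hle : ∀ x, g x ≤ g' x)
    (hgap : ∀ h h', 0 < h → h < h' → GaugeIntegralConverges σ g h' →
      GaugeIntegralConverges σ g' h) :
    hGaugeRaw σ g' = hGaugeRaw σ g := by
  rw [hGaugeRaw_eq_sInf, hGaugeRaw_eq_sInf]
  refine (sInf_image_ofReal_eq ?_ ?_).symm
  · rintro h ⟨hh, hg⟩
    exact ⟨hh, fun hg' => hg (hg'.mono (Eventually.of_forall hle) hh)⟩
  · rintro h ⟨hh, hg'⟩ h' hlt
    exact ⟨hh.trans hlt, fun hg => hg' (hgap h h' hh hlt hg)⟩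

end Exponent

section Integrability

variable {X : Type*} [MeasurableSpace X] {μ : Measure X} {f : X → ℝ}

lemma tendsto_setLIntegral_sublevel_nhdsGT_zero (hf : Measurable f)
    (hfin : ∫⁻ x, ENNReal.ofReal (f x) ∂μ < ∞) :
    Tendsto (fun s => ∫⁻ x in {x | f x ≤ s}, ENNReal.ofReal (f x) ∂μ) (𝓝[>] 0) (𝓝 0) := by
  set ν := μ.withDensity fun x => ENNReal.ofReal (f x)
  have hmeas : ∀ s : ℝ, MeasurableSet {x | f x ≤ s} := fun s => measurableSet_le hf measurable_const
  have hν : ∀ s, ν {x | f x ≤ s} = ∫⁻ x in {x | f x ≤ s}, ENNReal.ofReal (f x) ∂μ :=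
    fun s => withDensity_apply _ (hmeas s)
  have hlim := tendsto_measure_biInter_gt (μ := ν) (a := 0) (s := fun s => {x | f x ≤ s})
    (fun s _ => (hmeas s).nullMeasurableSet) (fun _ _ _ hij _ hx => le_trans hx hij)
    ⟨1, one_pos, (measure_mono (subset_univ _)).trans_lt (by simpa [ν] using hfin) |>.ne⟩
  have hinter : ν (⋂ s > 0, {x | f x ≤ s}) = 0 := by
    refine measure_mono_null (fun x hx => ?_) ((hν 0).trans ?_)
    · exact le_of_forall_gt_imp_ge_of_dense fun s hs => mem_iInter₂.1 hx s hs
    · exact (setLIntegral_congr_fun (hmeas 0) fun x hx => ENNReal.ofReal_eq_zero.2 hx).trans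
        lintegral_zero
  simpa only [Function.comp_def, hν, hinter] using hlim

lemma exists_setLIntegral_sublevel_lt (hf : Measurable f)
    (hfin : ∫⁻ x, ENNReal.ofReal (f x) ∂μ < ∞) {δ b : ℝ} (hδ : 0 < δ) (hb : 0 < b) :
    ∃ s, 0 < s ∧ s < b ∧ ∫⁻ x in {x | f x ≤ s}, ENNReal.ofReal (f x) ∂μ < ENNReal.ofReal δ := by
  obtain ⟨s, hsmall, hs⟩ := (((tendsto_setLIntegral_sublevel_nhdsGT_zero hf hfin).eventually
    (gt_mem_nhds (ENNReal.ofReal_pos.2 hδ))).and (Ioo_mem_nhdsGT hb)).exists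
  exact ⟨s, hs.1, hs.2, hsmall⟩

lemma measure_setOf_lt_lt_top (hf : Measurable f) (hfin : ∫⁻ x, ENNReal.ofReal (f x) ∂μ < ∞)
    {s : ℝ} (hs : 0 < s) : μ {x | s < f x} < ∞ := by
  have hs' : ENNReal.ofReal s ≠ 0 := (ENNReal.ofReal_pos.2 hs).ne'
  calc μ {x | s < f x} ≤ μ {x | ENNReal.ofReal s ≤ ENNReal.ofReal (f x)} :=
        measure_mono fun x hx => ENNReal.ofReal_le_ofReal (le_of_lt hx)
    _ ≤ (∫⁻ x, ENNReal.ofReal (f x) ∂μ) / ENNReal.ofReal s :=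
        meas_ge_le_lintegral_div hf.ennreal_ofReal.aemeasurable hs' ENNReal.ofReal_ne_top
    _ < ∞ := ENNReal.div_lt_top hfin.ne hs'

lemma exists_succ_lt_le_of_tendsto {s : ℕ → ℝ} (hs : Tendsto s atTop (𝓝 0)) {t : ℝ}
    (ht : 0 < t) (hts : t ≤ s 0) : ∃ k, s (k + 1) < t ∧ t ≤ s k := by
  classical
  have hex : ∃ n, s n < t := (hs.eventually (gt_mem_nhds ht)).exists
  obtain ⟨k, hk⟩ : ∃ k, Nat.find hex = k + 1 :=
    Nat.exists_eq_succ_of_ne_zero fun h0 => (Nat.find_spec hex).not_ge (h0 ▸ hts)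
  exact ⟨k, hk ▸ Nat.find_spec hex, not_lt.1 (Nat.find_min hex (by omega))⟩

variable {c : ℕ → ℝ}

lemma setLIntegral_superlinearEnvelope_le (hc : ∀ n, 0 ≤ c n) (S : Set X) (n : ℕ) :
    ∫⁻ x in S, ENNReal.ofReal (superlinearEnvelope c (f x)) ∂μ ≤
      ENNReal.ofReal (n + 1) * ∫⁻ x in S, ENNReal.ofReal (f x) ∂μ + ENNReal.ofReal (c n) * μ S := by
  calc ∫⁻ x in S, ENNReal.ofReal (superlinearEnvelope c (f x)) ∂μ
      ≤ ∫⁻ x in S, (ENNReal.ofReal (n + 1) * ENNReal.ofReal (f x) + ENNReal.ofReal (c n)) ∂μ :=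
        lintegral_mono fun x => ofReal_superlinearEnvelope_le hc (f x) n
    _ = _ := by
        rw [lintegral_add_right _ measurable_const, lintegral_const_mul' _ _ ENNReal.ofReal_ne_top,
          setLIntegral_const]

-- Split `X` into `{f ≤ 0}`, where the envelope vanishes, `{s 0 < f}`, and the slices
-- `{s (k + 1) < f ≤ s k}`, on which the envelope is compared with `(m k + 1) f + c (m k)`.
lemma lintegral_superlinearEnvelope_le (hc : ∀ n, 0 ≤ c n) (hc0 : Tendsto c atTop (𝓝 0))
    (hf : Measurable f) {s : ℕ → ℝ} (hs : Tendsto s atTop (𝓝 0)) (m : ℕ → ℕ) :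
    ∫⁻ x, ENNReal.ofReal (superlinearEnvelope c (f x)) ∂μ ≤
      (∫⁻ x, ENNReal.ofReal (f x) ∂μ + ENNReal.ofReal (c 0) * μ {x | s 0 < f x}) +
      ∑' k, (ENNReal.ofReal (m k + 1) * ∫⁻ x in {x | f x ≤ s k}, ENNReal.ofReal (f x) ∂μ +
        ENNReal.ofReal (c (m k)) * μ {x | s (k + 1) < f x}) := by
  set F := fun x => ENNReal.ofReal (superlinearEnvelope c (f x))
  set A := fun k => {x | s (k + 1) < f x} ∩ {x | f x ≤ s k}
  have hcover : univ ⊆ {x | f x ≤ 0} ∪ {x | s 0 < f x} ∪ ⋃ k, A k := by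
    intro x _
    rcases le_or_gt (f x) 0 with h0 | h0
    · exact Or.inl (Or.inl h0)
    rcases lt_or_ge (s 0) (f x) with htop | htop
    · exact Or.inl (Or.inr htop)
    obtain ⟨k, hk⟩ := exists_succ_lt_le_of_tendsto hs h0 htop
    exact Or.inr (mem_iUnion.2 ⟨k, hk⟩)
  have hzero : ∫⁻ x in {x | f x ≤ 0}, F x ∂μ = 0 :=
    (setLIntegral_congr_fun (measurableSet_le hf measurable_const) fun x hx => by
      simp [F, superlinearEnvelope_of_nonpos hc hc0 hx]).trans lintegral_zero
  have htop := setLIntegral_superlinearEnvelope_le (μ := μ) (f := f) hc {x | s 0 < f x} 0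
  rw [Nat.cast_zero, zero_add, ENNReal.ofReal_one, one_mul] at htop
  calc ∫⁻ x, F x ∂μ = ∫⁻ x in univ, F x ∂μ := by rw [Measure.restrict_univ]
    _ ≤ ∫⁻ x in {x | f x ≤ 0} ∪ {x | s 0 < f x} ∪ ⋃ k, A k, F x ∂μ := lintegral_mono_set hcover
    _ ≤ (∫⁻ x in {x | f x ≤ 0}, F x ∂μ + ∫⁻ x in {x | s 0 < f x}, F x ∂μ) +
          ∑' k, ∫⁻ x in A k, F x ∂μ :=
        (lintegral_union_le _ _ _).trans
          (add_le_add (lintegral_union_le _ _ _) (lintegral_iUnion_le _ _))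
    _ ≤ _ := by
        rw [hzero, zero_add]
        refine add_le_add (htop.trans (add_le_add (setLIntegral_le_lintegral _ _) le_rfl))
          (ENNReal.tsum_le_tsum fun k =>
            (setLIntegral_superlinearEnvelope_le hc (A k) (m k)).trans ?_)
        exact add_le_add (mul_le_mul_right (lintegral_mono_set inter_subset_right) _)
          (mul_le_mul_right (measure_mono inter_subset_left) _)

lemma lintegral_superlinearEnvelope_lt_top (hc : ∀ n, 0 ≤ c n) (hc0 : Tendsto c atTop (𝓝 0))
    (hf : Measurable f) (hfin : ∫⁻ x, ENNReal.ofReal (f x) ∂μ < ∞) {s : ℕ → ℝ}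
    (hs : Tendsto s atTop (𝓝 0)) (hs0 : 0 < s 0) (m : ℕ → ℕ)
    (hsub : ∀ k, ENNReal.ofReal (m k + 1) * ∫⁻ x in {x | f x ≤ s k}, ENNReal.ofReal (f x) ∂μ ≤
      ENNReal.ofReal (2⁻¹ ^ k))
    (hsuper : ∀ k, ENNReal.ofReal (c (m k)) * μ {x | s (k + 1) < f x} ≤
      ENNReal.ofReal (2⁻¹ ^ k)) :
    ∫⁻ x, ENNReal.ofReal (superlinearEnvelope c (f x)) ∂μ < ∞ := by
  have htop : ENNReal.ofReal (c 0) * μ {x | s 0 < f x} < ∞ :=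
    ENNReal.mul_lt_top ENNReal.ofReal_lt_top (measure_setOf_lt_lt_top hf hfin hs0)
  have hgeom : Summable fun k : ℕ => 2 * (2⁻¹ : ℝ) ^ k :=
    (summable_geometric_of_lt_one (by norm_num) (by norm_num)).mul_left 2
  refine (lintegral_superlinearEnvelope_le hc hc0 hf hs m).trans_lt
    (ENNReal.add_lt_top.2 ⟨ENNReal.add_lt_top.2 ⟨hfin, htop⟩, ?_⟩)
  calc _ ≤ ∑' k : ℕ, ENNReal.ofReal (2 * 2⁻¹ ^ k) := ENNReal.tsum_le_tsum fun k =>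
        (add_le_add (hsub k) (hsuper k)).trans_eq
          (by rw [← ENNReal.ofReal_add (by positivity) (by positivity), two_mul])
    _ = ENNReal.ofReal (∑' k : ℕ, 2 * 2⁻¹ ^ k) :=
        (ENNReal.ofReal_tsum_of_nonneg (fun k => by positivity) hgeom).symm
    _ < ∞ := ENNReal.ofReal_lt_top

-- The `k`-th slice of `f i` is paired with the index `Nat.pair i k`, so each `c n` has to serve
-- a single slice of a single function, and `c n` can be chosen small against that slice's measure.
lemma exists_superlinearEnvelope_lintegral_lt_top (μ : ℕ → Measure X) (f : ℕ → X → ℝ)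
    (hf : ∀ i, Measurable (f i)) :
    ∃ c : ℕ → ℝ, (∀ n, 0 < c n) ∧ Tendsto c atTop (𝓝 0) ∧
      ∀ i, ∫⁻ x, ENNReal.ofReal (f i x) ∂μ i < ∞ →
        ∫⁻ x, ENNReal.ofReal (superlinearEnvelope c (f i x)) ∂μ i < ∞ := by
  have hlevel : ∀ i k, ∃ s : ℝ, 0 < s ∧ s < 2⁻¹ ^ k ∧
      (∫⁻ x, ENNReal.ofReal (f i x) ∂μ i < ∞ →
        ∫⁻ x in {x | f i x ≤ s}, ENNReal.ofReal (f i x) ∂μ i <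
          ENNReal.ofReal (2⁻¹ ^ k / (Nat.pair i k + 1))) := by
    intro i k
    by_cases hfin : ∫⁻ x, ENNReal.ofReal (f i x) ∂μ i < ∞
    · obtain ⟨s, hs0, hs1, hsmall⟩ := exists_setLIntegral_sublevel_lt (hf i) hfin
        (by positivity : (0:ℝ) < 2⁻¹ ^ k / (Nat.pair i k + 1)) (by positivity : (0:ℝ) < 2⁻¹ ^ k)
      exact ⟨s, hs0, hs1, fun _ => hsmall⟩
    · exact ⟨2⁻¹ ^ (k + 1), by positivity,
        pow_lt_pow_right_of_lt_one₀ (by norm_num) (by norm_num) k.lt_succ_self,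
        fun h => absurd h hfin⟩
  choose s hs0 hs1 hsmall using hlevel
  have hgeom : Tendsto (fun k : ℕ => (2⁻¹ : ℝ) ^ k) atTop (𝓝 0) :=
    tendsto_pow_atTop_nhds_zero_of_lt_one (by norm_num) (by norm_num)
  set M : ℕ → ℕ → ℝ≥0∞ := fun i k => μ i {x | s i (k + 1) < f i x}
  set c : ℕ → ℝ := fun n => 2⁻¹ ^ n / ((M n.unpair.1 n.unpair.2).toReal + 1)
  have hc : ∀ n, 0 < c n := fun n =>
    div_pos (by positivity) (add_pos_of_nonneg_of_pos ENNReal.toReal_nonneg one_pos)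
  have hc0 : Tendsto c atTop (𝓝 0) :=
    squeeze_zero (fun n => (hc n).le) (fun n => div_le_self (by positivity) (by simp)) hgeom
  refine ⟨c, hc, hc0, fun i hfin => lintegral_superlinearEnvelope_lt_top (fun n => (hc n).le) hc0
    (hf i) hfin (squeeze_zero (fun k => (hs0 i k).le) (fun k => (hs1 i k).le) hgeom) (hs0 i 0)
    (Nat.pair i) (fun k => ?_) (fun k => ?_)⟩
  · calc _ ≤ ENNReal.ofReal (Nat.pair i k + 1) * ENNReal.ofReal (2⁻¹ ^ k / (Nat.pair i k + 1)) :=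
          mul_le_mul_right (hsmall i k hfin).le _
      _ = _ := by rw [← ENNReal.ofReal_mul (by positivity), mul_div_cancel₀ _ (by positivity)]
  · have hM : M i k ≠ ∞ := (measure_setOf_lt_lt_top (hf i) hfin (hs0 i (k + 1))).ne
    change ENNReal.ofReal (c (Nat.pair i k)) * M i k ≤ _
    rw [← ENNReal.ofReal_toReal hM, ← ENNReal.ofReal_mul (hc _).le]
    refine ENNReal.ofReal_le_ofReal ?_
    simp only [c, Nat.unpair_pair]
    calc 2⁻¹ ^ Nat.pair i k / ((M i k).toReal + 1) * (M i k).toReal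
        ≤ 2⁻¹ ^ Nat.pair i k := by
          rw [div_mul_eq_mul_div, div_le_iff₀ (by positivity)]
          exact mul_le_mul_of_nonneg_left (by linarith) (by positivity)
      _ ≤ 2⁻¹ ^ k := pow_le_pow_of_le_one (by norm_num) (by norm_num) (Nat.right_le_pair i k)

end Integrability

lemma exists_hGaugeRaw_superlinearEnvelope_comp_eq (σ : Measure ℝ) {v : ℝ → ℝ}
    (hv : Monotone v) :
    ∃ c : ℕ → ℝ, (∀ n, 0 < c n) ∧ Tendsto c atTop (𝓝 0) ∧
      hGaugeRaw σ (superlinearEnvelope c ∘ v) = hGaugeRaw σ v := by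
  let e : ℕ ≃ ℚ × ℚ := (Denumerable.eqv (ℚ × ℚ)).symm
  obtain ⟨c, hc, hc0, hint⟩ := exists_superlinearEnvelope_lintegral_lt_top
    (fun n => σ.restrict (Ioc 0 ((e n).2 : ℝ))) (fun n r => v (r ^ (1 / ((e n).1 : ℝ))))
    (fun n => hv.measurable.comp (measurable_id.pow_const _))
  refine ⟨c, hc, hc0, hGaugeRaw_eq_of_le (fun x => le_superlinearEnvelope (fun n => (hc n).le) _)
    fun h h' hh hlt hconv => ?_⟩
  obtain ⟨q, hhq, hqh'⟩ := exists_rat_btwn hlt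
  obtain ⟨ε, hε, hfin⟩ := hconv.of_exponent_le hv (hh.trans hhq) hqh'.le
  obtain ⟨δ, hδ, hδε⟩ := exists_rat_btwn hε
  have he : e (e.symm (q, δ)) = (q, δ) := e.apply_symm_apply _
  have hfinδ := hint (e.symm (q, δ))
  simp only [he] at hfinδ
  exact GaugeIntegralConverges.of_exponent_le
    ((monotone_superlinearEnvelope fun n => (hc n).le).comp hv) hh hhq.le
    ⟨δ, hδ, hfinδ ((lintegral_mono_set (Ioc_subset_Ioc_right hδε.le)).trans_lt hfin)⟩

theorem exists_slower_gauge_same_exponent_general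
    (σ : Measure ℝ)
    (u : ℝ → ℝ) (hu : IsGauge1 u) :
    ∃ ub : ℝ → ℝ, IsGauge1 ub ∧ GaugePrec ub u ∧ hGaugeRaw σ ub = hGaugeRaw σ u := by
  obtain ⟨v, hv, hvu⟩ := hu.1.exists_monotone_eventuallyEq
  obtain ⟨c, hc, hc0, hexp⟩ := exists_hGaugeRaw_superlinearEnvelope_comp_eq σ hv
  refine ⟨superlinearEnvelope c ∘ u, hu.superlinearEnvelope_comp hc hc0,
    hu.gaugePrec_superlinearEnvelope_comp hc, ?_⟩
  rw [← hGaugeRaw_congr hvu, ← hexp]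
  exact hGaugeRaw_congr (hvu.fun_comp _).symm

/-- **Construction of a slower gauge function with the same critical exponent.**
For any Borel measure `σ` on `(0,∞)` and any `u ∈ 𝔇₁` with `h_u < ∞`, there is
`ū ∈ 𝔇₁` with `ū ≺ u` and `h_ū = h_u`. -/
theorem exists_slower_gauge_same_exponent
    (σ : Measure ℝ) (hσ : σ (Iic (0:ℝ)) = 0)
    (u : ℝ → ℝ) (hu : IsGauge1 u) (hufin : hGaugeRaw σ u < ∞) :
    ∃ ub : ℝ → ℝ, IsGauge1 ub ∧ GaugePrec ub u ∧ hGaugeRaw σ ub = hGaugeRaw σ u :=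
  exists_slower_gauge_same_exponent_general σ u hu

end LevyFractal
end
end

section
/- Let σ be a Borel measure on (0,∞) and let u ∈ 𝔇_1 with h_u < ∞ and u ≺ Id (that is, r ↦ u(r)/r tends monotonically to infinity at 0). Then there exists a gauge function u̲ ∈ 𝔇_1 such that u ≺ u̲ and h_{u̲} ≤ h_u. -/
/-!
Fix exponents `h n ↓ h_u`. For `h > h_u` the integral `∫_{(0,ε]} u (r ^ (1/h)) dσ` diverges for
every `ε > 0`, so one can pick `η m ↓ 0` such that, for all `n ≤ m`, the part of the `h n`-integral
where `r ^ (1 / h n) ∈ (η (m+1), η m]` is at least `(m + 2) m`. Put `ū s = u s / F (u s / s)`,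
where `F x = ⨅ k, (k + 1 + x / X k)` with `X k = u (η (k+1)) / η (k+1)`. Since `F` is
nondecreasing and unbounded while `F x / x` is nonincreasing, `ū ∈ 𝔇₁` and `u / ū = F (u s / s)`
increases to `∞` as `s → 0`. On the `m`-th block `F (u s / s) ≤ m + 2`, so that block contributes
at least `m` to the `h n`-integral of `ū`; hence `h_ū ≤ h n` for every `n`.
-/

open MeasureTheory Filter Set Topology
open scoped ENNReal NNReal Classical

noncomputable section

namespace LevyFractal

/-! ### Lévy processes -/

variable {d : ℕ}

variable {Ω : Type*} [MeasurableSpace Ω]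

theorem IsGauge1.exists_radius {u : ℝ → ℝ} (hu : IsGauge1 u) :
    ∃ ε > 0, MonotoneOn u (Icc 0 ε) ∧ AntitoneOn (fun r => u r / r) (Ioc 0 ε) ∧
      ∀ r ∈ Ioc 0 ε, 0 < u r := by
  obtain ⟨⟨-, -, ε₁, hε₁, hmono⟩, ε₂, hε₂, hpos, hanti⟩ := hu
  refine ⟨min ε₁ ε₂, lt_min hε₁ hε₂, hmono.mono (Icc_subset_Icc_right (min_le_left _ _)),
    hanti.mono (Ioc_subset_Ioc_right (min_le_right _ _)), fun r hr => ?_⟩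
  have := hpos r ⟨hr.1, hr.2.trans (min_le_right _ _)⟩
  exact (div_pos_iff_of_pos_right hr.1).1 this

section SlowGrowth

variable {X : ℕ → ℝ}

def slowGrowth (X : ℕ → ℝ) (x : ℝ) : ℝ := ⨅ k : ℕ, ((k : ℝ) + 1 + x / X k)

theorem bddBelow_range_slowGrowth (hX : ∀ k, 0 < X k) {x : ℝ} (hx : 0 ≤ x) :
    BddBelow (range fun k : ℕ => (k : ℝ) + 1 + x / X k) :=
  ⟨0, forall_mem_range.2 fun k => add_nonneg (by positivity) (div_nonneg hx (hX k).le)⟩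

theorem one_le_slowGrowth (hX : ∀ k, 0 < X k) {x : ℝ} (hx : 0 ≤ x) : 1 ≤ slowGrowth X x :=
  le_ciInf fun k => by
    have : 0 ≤ x / X k := div_nonneg hx (hX k).le
    linarith [k.cast_nonneg (α := ℝ)]

theorem slowGrowth_le (hX : ∀ k, 0 < X k) {x : ℝ} {k : ℕ} (hx : 0 ≤ x) (hxk : x ≤ X k) :
    slowGrowth X x ≤ k + 2 := by
  refine (ciInf_le (bddBelow_range_slowGrowth hX hx) k).trans ?_
  have : x / X k ≤ 1 := div_le_one_of_le₀ hxk (hX k).le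
  linarith

theorem monotoneOn_slowGrowth (hX : ∀ k, 0 < X k) : MonotoneOn (slowGrowth X) (Ioi 0) :=
  fun x hx y _ hxy => ciInf_mono (bddBelow_range_slowGrowth hX (le_of_lt hx)) fun k => by
    gcongr
    exact (hX k).le

-- `slowGrowth X x / x = ⨅ k, ((k + 1) / x + 1 / X k)`, an infimum of nonincreasing functions.
theorem monotoneOn_div_slowGrowth (hX : ∀ k, 0 < X k) :
    MonotoneOn (fun x => x / slowGrowth X x) (Ioi 0) := by
  intro x (hx : 0 < x) y (hy : 0 < y) hxy
  have hpos : ∀ z : ℝ, 0 < z → 0 < slowGrowth X z := fun z hz =>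
    one_pos.trans_le (one_le_slowGrowth hX hz.le)
  rw [div_le_div_iff₀ (hpos x hx) (hpos y hy)]
  change x * slowGrowth X y ≤ y * ⨅ k : ℕ, ((k : ℝ) + 1 + x / X k)
  rw [Real.mul_iInf_of_nonneg hy.le]
  refine le_ciInf fun k => ?_
  calc x * slowGrowth X y ≤ x * ((k : ℝ) + 1 + y / X k) :=
        mul_le_mul_of_nonneg_left (ciInf_le (bddBelow_range_slowGrowth hX hy.le) k) hx.le
    _ ≤ y * ((k : ℝ) + 1 + x / X k) := by
        have hdiff : y * ((k : ℝ) + 1 + x / X k) - x * ((k : ℝ) + 1 + y / X k)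
            = (y - x) * ((k : ℝ) + 1) := by ring
        have := mul_nonneg (sub_nonneg.2 hxy) (by positivity : (0 : ℝ) ≤ k + 1)
        linarith

theorem tendsto_slowGrowth_atTop (hX : ∀ k, 0 < X k) : Tendsto (slowGrowth X) atTop atTop := by
  refine tendsto_atTop.2 fun b => ?_
  obtain ⟨N, hN⟩ := exists_nat_ge b
  filter_upwards [eventually_ge_atTop 0,
    (finite_Iic N).eventually_all.2 fun k _ => eventually_ge_atTop (N * X k)] with x hx hxN
  refine hN.trans (le_ciInf fun k => ?_)
  have hxk : 0 ≤ x / X k := div_nonneg hx (hX k).le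
  rcases le_or_gt k N with hk | hk
  · have : (N : ℝ) ≤ x / X k := (le_div_iff₀ (hX k)).2 (hxN k hk)
    linarith [k.cast_nonneg (α := ℝ)]
  · have : (N : ℝ) < k := by exact_mod_cast hk
    linarith

end SlowGrowth

section SlowDown

variable {F u : ℝ → ℝ}

def slowDown (F u : ℝ → ℝ) (s : ℝ) : ℝ := u s / F (u s / s)

theorem isGauge1_slowDown (hu : IsGauge1 u) (hF : ∀ x, 0 < x → 1 ≤ F x)
    (hFmono : MonotoneOn F (Ioi 0)) (hFdiv : MonotoneOn (fun x => x / F x) (Ioi 0)) :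
    IsGauge1 (slowDown F u) := by
  obtain ⟨ε, hε, hmono, hanti, hpos⟩ := hu.exists_radius
  have hφ : ∀ s ∈ Ioc 0 ε, 0 < u s / s := fun s hs => div_pos (hpos s hs) hs.1
  have hFφ : ∀ s ∈ Ioc 0 ε, 0 < F (u s / s) := fun s hs => one_pos.trans_le (hF _ (hφ s hs))
  have hzero : slowDown F u 0 = 0 := by simp [slowDown, hu.1.1]
  have hnonneg : ∀ s ∈ Icc 0 ε, 0 ≤ slowDown F u s := by
    rintro s ⟨hs0, hsε⟩
    rcases hs0.eq_or_lt with rfl | hs0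
    · exact hzero.ge
    · exact (div_pos (hpos s ⟨hs0, hsε⟩) (hFφ s ⟨hs0, hsε⟩)).le
  have hquot : ∀ s, slowDown F u s / s = u s / s / F (u s / s) := fun s => div_right_comm _ _ _
  refine ⟨⟨hzero, ?_, ε, hε, ?_⟩, ε, hε, fun s hs => ?_, fun s hs t ht hst => ?_⟩
  · refine squeeze_zero' ?_ ?_ hu.1.2.1
    · filter_upwards [Ioc_mem_nhdsGT hε] with s hs using hnonneg s (Ioc_subset_Icc_self hs)
    · filter_upwards [Ioc_mem_nhdsGT hε] with s hs
      exact div_le_self (hpos s hs).le (hF _ (hφ s hs))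
  · intro s hs t ht hst
    rcases hs.1.eq_or_lt with rfl | hs0
    · exact hzero.le.trans (hnonneg t ht)
    have ht' : t ∈ Ioc 0 ε := ⟨hs0.trans_le hst, ht.2⟩
    exact div_le_div₀ (hpos t ht').le (hmono hs ht hst) (hFφ t ht')
      (hFmono (hφ t ht') (hφ s ⟨hs0, hs.2⟩) (hanti ⟨hs0, hs.2⟩ ht' hst))
  · rw [hquot]
    exact div_pos (hφ s hs) (hFφ s hs)
  · simp only [hquot]
    exact hFdiv (hφ t ht) (hφ s hs) (hanti hs ht hst)

theorem gaugePrec_slowDown (hu : IsGauge1 u) (huid : GaugePrec u fun r => r)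
    (hFmono : MonotoneOn F (Ioi 0)) (hFtop : Tendsto F atTop atTop) :
    GaugePrec u (slowDown F u) := by
  obtain ⟨ε, hε, -, hanti, hpos⟩ := hu.exists_radius
  obtain ⟨-, -, -, hφtop⟩ := huid
  have hφ : ∀ s ∈ Ioc 0 ε, 0 < u s / s := fun s hs => div_pos (hpos s hs) hs.1
  have hquot : ∀ s ∈ Ioc 0 ε, u s / slowDown F u s = F (u s / s) := fun s hs =>
    div_div_cancel₀ (hpos s hs).ne'
  refine ⟨ε, hε, fun s hs t ht hst => ?_, ?_⟩
  · simp only [hquot s hs, hquot t ht]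
    exact hFmono (hφ t ht) (hφ s hs) (hanti hs ht hst)
  · exact (hFtop.comp hφtop).congr' <|
      eventually_of_mem (Ioc_mem_nhdsGT hε) fun s hs => (hquot s hs).symm

theorem le_mul_slowDown {s c : ℝ} (hu : 0 ≤ u s) (hF : 0 < F (u s / s)) (hc : F (u s / s) ≤ c) :
    u s ≤ c * slowDown F u s := by
  rw [slowDown, mul_div_assoc', le_div_iff₀ hF, mul_comm]
  exact mul_le_mul_of_nonneg_right hc hu

theorem le_mul_slowDown_slowGrowth {η : ℕ → ℝ} {ε : ℝ}
    (hanti : AntitoneOn (fun r => u r / r) (Ioc 0 ε)) (hpos : ∀ r ∈ Ioc 0 ε, 0 < u r)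
    (hη : ∀ m, η m ∈ Ioc 0 ε) :
    ∀ m : ℕ, ∀ s ∈ Ioc (η (m + 1)) (η m),
      u s ≤ (m + 2 : ℕ) * slowDown (slowGrowth fun k => u (η (k + 1)) / η (k + 1)) u s := by
  intro m s hs
  have hX : ∀ k, 0 < u (η (k + 1)) / η (k + 1) := fun k => div_pos (hpos _ (hη _)) (hη _).1
  have hs' : s ∈ Ioc 0 ε := ⟨(hη _).1.trans hs.1, hs.2.trans (hη m).2⟩
  have hφ : 0 ≤ u s / s := (div_pos (hpos s hs') hs'.1).le
  refine le_mul_slowDown (hpos s hs').le (one_pos.trans_le (one_le_slowGrowth hX hφ)) ?_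
  push_cast
  exact slowGrowth_le hX hφ (hanti (hη _) hs' hs.1.le)

end SlowDown

section Exponent

variable {σ : Measure ℝ} {u : ℝ → ℝ} {h : ℝ}

theorem hGaugeRaw_le_ofReal (hh : 0 < h)
    (hdiv : ∀ ε, 0 < ε → ∫⁻ r in Ioc 0 ε, ENNReal.ofReal (u (r ^ (1 / h))) ∂σ = ∞) :
    hGaugeRaw σ u ≤ ENNReal.ofReal h :=
  sInf_le ⟨h, hh, rfl, 1, one_pos, fun ε hε _ => hdiv ε hε⟩

-- Admissible exponents are upward closed because `r ↦ r ^ (1 / h)` increases with `h` on `(0, 1]`.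
theorem setLIntegral_Ioc_eq_top_of_hGaugeRaw_lt {ε₀ ε : ℝ} (hmono : MonotoneOn u (Icc 0 ε₀))
    (hε₀ : 0 < ε₀) (hlt : hGaugeRaw σ u < ENNReal.ofReal h) (hε : 0 < ε) :
    ∫⁻ r in Ioc 0 ε, ENNReal.ofReal (u (r ^ (1 / h))) ∂σ = ∞ := by
  obtain ⟨_, ⟨h', hh', rfl, ε₁, hε₁, hdiv⟩, hlt'⟩ := sInf_lt_iff.1 hlt
  have hh'h : h' < h := (ENNReal.ofReal_lt_ofReal_iff'.1 hlt').1
  have hh : 0 < h := hh'.trans hh'h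
  set δ := min (min ε ε₁) (min 1 (ε₀ ^ h))
  have hδ : 0 < δ := lt_min (lt_min hε hε₁) (lt_min one_pos (Real.rpow_pos_of_pos hε₀ h))
  have hmem : ∀ r ∈ Ioc 0 δ, r ^ (1 / h) ∈ Icc 0 ε₀ := fun r hr =>
    ⟨Real.rpow_nonneg hr.1.le _, by
      rw [one_div, Real.rpow_inv_le_iff_of_pos hr.1.le hε₀.le hh]
      exact hr.2.trans ((min_le_right _ _).trans (min_le_right _ _))⟩
  rw [eq_top_iff, ← hdiv δ hδ ((min_le_left _ _).trans (min_le_right _ _))]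
  calc ∫⁻ r in Ioc 0 δ, ENNReal.ofReal (u (r ^ (1 / h'))) ∂σ
      ≤ ∫⁻ r in Ioc 0 δ, ENNReal.ofReal (u (r ^ (1 / h))) ∂σ := by
        refine setLIntegral_mono' measurableSet_Ioc fun r hr => ENNReal.ofReal_le_ofReal ?_
        have hle : r ^ (1 / h') ≤ r ^ (1 / h) :=
          Real.rpow_le_rpow_of_exponent_ge hr.1
            (hr.2.trans ((min_le_right _ _).trans (min_le_left _ _)))
            (one_div_le_one_div_of_le hh' hh'h.le)
        exact hmono ⟨Real.rpow_nonneg hr.1.le _, hle.trans (hmem r hr).2⟩ (hmem r hr) hle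
    _ ≤ ∫⁻ r in Ioc 0 ε, ENNReal.ofReal (u (r ^ (1 / h))) ∂σ :=
        lintegral_mono_set (Ioc_subset_Ioc_right ((min_le_left _ _).trans (min_le_left _ _)))

end Exponent

theorem rpow_one_div_mem_Ioc {a b h r : ℝ} (ha : 0 ≤ a) (hb : 0 ≤ b) (hh : 0 < h)
    (hr : r ∈ Ioc (a ^ h) (b ^ h)) : r ^ (1 / h) ∈ Ioc a b := by
  have hr0 : 0 ≤ r := (Real.rpow_nonneg ha h).trans hr.1.le
  rw [one_div]
  exact ⟨(Real.lt_rpow_inv_iff_of_pos ha hr0 hh).2 hr.1,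
    (Real.rpow_inv_le_iff_of_pos hr0 hb hh).2 hr.2⟩

theorem tendsto_rpow_const_nhdsGT_zero {h : ℝ} (hh : 0 < h) :
    Tendsto (fun a : ℝ => a ^ h) (𝓝[>] 0) (𝓝[>] 0) := by
  refine tendsto_nhdsWithin_iff.2 ⟨?_, eventually_mem_nhdsWithin.mono fun a ha =>
    Real.rpow_pos_of_pos ha h⟩
  have hid : Tendsto (fun a : ℝ => a) (𝓝[>] 0) (𝓝 0) :=
    tendsto_nhdsWithin_of_tendsto_nhds tendsto_id
  simpa [Real.zero_rpow hh.ne'] using hid.rpow_const (Or.inr hh.le)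

section Blocks

variable {μ : Measure ℝ}

theorem eventually_le_setLIntegral_Ioc (f : ℝ → ℝ≥0∞) {X : ℝ} {K : ℝ≥0∞}
    (hK : K < ∫⁻ r in Ioc 0 X, f r ∂μ) : ∀ᶠ a in 𝓝[>] 0, K ≤ ∫⁻ r in Ioc a X, f r ∂μ := by
  rcases le_or_gt X 0 with hX | hX
  · simp [Ioc_eq_empty_of_le hX] at hK
  have hunion : Ioc 0 X = ⋃ k : ℕ, Ioc (X / (k + 1)) X := by
    ext s
    simp only [mem_Ioc, mem_iUnion]
    refine ⟨fun ⟨hs, hsX⟩ => ?_, fun ⟨k, hk, hsX⟩ =>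
      ⟨(by positivity : 0 < X / (k + 1)).trans hk, hsX⟩⟩
    obtain ⟨k, hk⟩ := exists_nat_gt (X / s)
    refine ⟨k, (div_lt_iff₀ (by positivity)).2 ?_, hsX⟩
    nlinarith [(div_lt_iff₀ hs).1 hk]
  have hdir : Directed (· ⊆ ·) fun k : ℕ => Ioc (X / (k + 1)) X :=
    Monotone.directed_le fun k l hkl => Ioc_subset_Ioc_left <|
      div_le_div_of_nonneg_left hX.le (by positivity) (by gcongr)
  rw [hunion, setLIntegral_iUnion_of_directed f hdir] at hK
  obtain ⟨k, hk⟩ := lt_iSup_iff.1 hK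
  filter_upwards [Ioc_mem_nhdsGT (by positivity : 0 < X / (k + 1))] with a ha
  exact hk.le.trans (lintegral_mono_set (Ioc_subset_Ioc_left ha.2))

theorem eventually_le_setLIntegral_Ioc_rpow (f : ℝ → ℝ≥0∞) {b h : ℝ} {K : ℝ≥0∞} (hh : 0 < h)
    (hK : K < ∫⁻ r in Ioc 0 (b ^ h), f r ∂μ) :
    ∀ᶠ a in 𝓝[>] 0, K ≤ ∫⁻ r in Ioc (a ^ h) (b ^ h), f r ∂μ :=
  (tendsto_rpow_const_nhdsGT_zero hh).eventually (eventually_le_setLIntegral_Ioc f hK)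

theorem exists_seq_forall_eventually_nhdsGT {P : ℕ → ℝ → ℝ → Prop}
    (hP : ∀ m b, 0 < b → ∀ᶠ a in 𝓝[>] 0, P m a b) {b₀ : ℝ} (hb₀ : 0 < b₀) :
    ∃ η : ℕ → ℝ, (∀ m, η m ∈ Ioc 0 b₀) ∧ Tendsto η atTop (𝓝 0) ∧
      ∀ m, P m (η (m + 1)) (η m) := by
  have hstep : ∀ m b, ∃ a, 0 < b → 0 < a ∧ a ≤ b / 2 ∧ P m a b := by
    intro m b
    by_cases hb : 0 < b
    · obtain ⟨a, hPa, ha⟩ := ((hP m b hb).and (Ioc_mem_nhdsGT (half_pos hb))).exists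
      exact ⟨a, fun _ => ⟨ha.1, ha.2, hPa⟩⟩
    · exact ⟨0, fun h => absurd h hb⟩
  choose next hnext using hstep
  let η : ℕ → ℝ := fun m => Nat.rec (motive := fun _ => ℝ) b₀ next m
  have hη : ∀ m, 0 < η m ∧ η m ≤ b₀ * (1 / 2) ^ m := by
    intro m
    induction m with
    | zero => exact ⟨hb₀, by simp [η]⟩
    | succ m ih =>
      obtain ⟨hpos, hhalf, -⟩ := hnext m (η m) ih.1
      refine ⟨hpos, hhalf.trans ?_⟩
      rw [pow_succ]
      linarith [ih.2]
  refine ⟨η, fun m => ⟨(hη m).1, (hη m).2.trans ?_⟩, ?_, fun m => (hnext m (η m) (hη m).1).2.2⟩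
  · exact mul_le_of_le_one_right hb₀.le (pow_le_one₀ (by norm_num) (by norm_num))
  · refine squeeze_zero (fun m => (hη m).1.le) (fun m => (hη m).2) ?_
    simpa using (tendsto_pow_atTop_nhds_zero_of_lt_one (by norm_num : (0:ℝ) ≤ 1 / 2)
      (by norm_num)).const_mul b₀

theorem exists_seq_le_setLIntegral_Ioc_rpow {f : ℕ → ℝ → ℝ≥0∞} {h : ℕ → ℝ} {K : ℕ → ℝ≥0∞}
    (hh : ∀ n, 0 < h n) (hdiv : ∀ n ε, 0 < ε → ∫⁻ r in Ioc 0 ε, f n r ∂μ = ∞)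
    (hK : ∀ m, K m < ∞) {b₀ : ℝ} (hb₀ : 0 < b₀) :
    ∃ η : ℕ → ℝ, (∀ m, η m ∈ Ioc 0 b₀) ∧ Tendsto η atTop (𝓝 0) ∧
      ∀ n m, n ≤ m → K m ≤ ∫⁻ r in Ioc (η (m + 1) ^ h n) (η m ^ h n), f n r ∂μ := by
  obtain ⟨η, hη, hη0, hblock⟩ := exists_seq_forall_eventually_nhdsGT
    (P := fun m a b => ∀ n ≤ m, K m ≤ ∫⁻ r in Ioc (a ^ h n) (b ^ h n), f n r ∂μ)
    (fun m b hb => (finite_Iic m).eventually_all.2 fun n _ =>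
      eventually_le_setLIntegral_Ioc_rpow _ (hh n) <| by
        rw [hdiv n _ (Real.rpow_pos_of_pos hb _)]
        exact hK m) hb₀
  exact ⟨η, hη, hη0, fun n m hnm => hblock m n hnm⟩

theorem setLIntegral_Ioc_eq_top_of_blocks {g : ℝ → ℝ≥0∞} {θ : ℕ → ℝ} (hθ₀ : ∀ m, 0 ≤ θ m)
    (hθ : Tendsto θ atTop (𝓝 0))
    (hblock : ∀ᶠ m : ℕ in atTop, (m : ℝ≥0∞) ≤ ∫⁻ r in Ioc (θ (m + 1)) (θ m), g r ∂μ)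
    {ε : ℝ} (hε : 0 < ε) : ∫⁻ r in Ioc 0 ε, g r ∂μ = ∞ := by
  refine top_le_iff.1 (le_of_tendsto ENNReal.tendsto_nat_nhds_top ?_)
  filter_upwards [hblock, hθ.eventually_lt_const hε] with m hm hθm
  exact hm.trans (lintegral_mono_set (Ioc_subset_Ioc (hθ₀ _) hθm.le))

theorem setLIntegral_Ioc_rpow_eq_top_of_le_mul {u v : ℝ → ℝ} {η : ℕ → ℝ} {h ε : ℝ}
    (hη : ∀ m, 0 < η m) (hη0 : Tendsto η atTop (𝓝 0)) (hh : 0 < h)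
    (hblock : ∀ᶠ m : ℕ in atTop, ((m + 2 : ℕ) : ℝ≥0∞) * m ≤
      ∫⁻ r in Ioc (η (m + 1) ^ h) (η m ^ h), ENNReal.ofReal (u (r ^ (1 / h))) ∂μ)
    (huv : ∀ m : ℕ, ∀ s ∈ Ioc (η (m + 1)) (η m), u s ≤ (m + 2 : ℕ) * v s) (hε : 0 < ε) :
    ∫⁻ r in Ioc 0 ε, ENNReal.ofReal (v (r ^ (1 / h))) ∂μ = ∞ := by
  refine setLIntegral_Ioc_eq_top_of_blocks (fun m => (Real.rpow_pos_of_pos (hη m) h).le)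
    (by simpa [Real.zero_rpow hh.ne'] using hη0.rpow_const (Or.inr hh.le)) ?_ hε
  filter_upwards [hblock] with m hm
  have hc : ((m + 2 : ℕ) : ℝ≥0∞) ≠ 0 := by positivity
  refine (ENNReal.mul_le_mul_iff_right hc (ENNReal.natCast_ne_top _)).1 (hm.trans ?_)
  rw [← lintegral_const_mul' _ _ (ENNReal.natCast_ne_top _)]
  refine setLIntegral_mono' measurableSet_Ioc fun r hr => ?_
  have hs := rpow_one_div_mem_Ioc (hη _).le (hη _).le hh hr
  calc ENNReal.ofReal (u (r ^ (1 / h))) ≤ ENNReal.ofReal ((m + 2 : ℕ) * v (r ^ (1 / h))) :=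
        ENNReal.ofReal_le_ofReal (huv m _ hs)
    _ = (m + 2 : ℕ) * ENNReal.ofReal (v (r ^ (1 / h))) := by
        rw [ENNReal.ofReal_mul (Nat.cast_nonneg _), ENNReal.ofReal_natCast]

end Blocks

theorem exists_faster_gauge_le_exponent_general
    (σ : Measure ℝ)
    (u : ℝ → ℝ) (hu : IsGauge1 u) (huid : GaugePrec u (fun r => r))
    (hufin : hGaugeRaw σ u < ∞) :
    ∃ ul : ℝ → ℝ, IsGauge1 ul ∧ GaugePrec u ul ∧ hGaugeRaw σ ul ≤ hGaugeRaw σ u := by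
  obtain ⟨ε, hε, hmono, hanti, hpos⟩ := hu.exists_radius
  set t₀ := (hGaugeRaw σ u).toReal
  have ht₀ : hGaugeRaw σ u = ENNReal.ofReal t₀ := (ENNReal.ofReal_toReal hufin.ne).symm
  set h : ℕ → ℝ := fun n => t₀ + 1 / (n + 1)
  have hh : ∀ n, 0 < h n := fun n =>
    add_pos_of_nonneg_of_pos ENNReal.toReal_nonneg Nat.one_div_pos_of_nat
  have hlt : ∀ n, hGaugeRaw σ u < ENNReal.ofReal (h n) := fun n => by
    rw [ht₀, ENNReal.ofReal_lt_ofReal_iff (hh n)]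
    exact lt_add_of_pos_right _ Nat.one_div_pos_of_nat
  obtain ⟨η, hη, hη0, hblock⟩ := exists_seq_le_setLIntegral_Ioc_rpow
    (f := fun n r => ENNReal.ofReal (u (r ^ (1 / h n))))
    (K := fun m => ((m + 2 : ℕ) : ℝ≥0∞) * m) hh
    (fun n _ hε' => setLIntegral_Ioc_eq_top_of_hGaugeRaw_lt hmono hε (hlt n) hε')
    (fun m => ENNReal.mul_lt_top (ENNReal.natCast_lt_top _) (ENNReal.natCast_lt_top _)) hε
  have hX : ∀ m, 0 < u (η (m + 1)) / η (m + 1) := fun m => div_pos (hpos _ (hη _)) (hη _).1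
  have hFmono := monotoneOn_slowGrowth hX
  refine ⟨_, isGauge1_slowDown hu (fun x hx => one_le_slowGrowth hX (le_of_lt hx)) hFmono
    (monotoneOn_div_slowGrowth hX), gaugePrec_slowDown hu huid hFmono
    (tendsto_slowGrowth_atTop hX), ?_⟩
  refine ge_of_tendsto' (f := fun n => ENNReal.ofReal (h n)) (x := atTop) ?_ fun n =>
    hGaugeRaw_le_ofReal (hh n) fun ε' hε' => setLIntegral_Ioc_rpow_eq_top_of_le_mul
      (fun m => (hη m).1) hη0 (hh n) ((eventually_ge_atTop n).mono (hblock n))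
      (le_mul_slowDown_slowGrowth hanti hpos hη) hε'
  rw [ht₀]
  exact ENNReal.tendsto_ofReal <| by
    simpa [h] using tendsto_one_div_add_atTop_nhds_zero_nat.const_add t₀

/-- **Construction of a faster gauge function with at most the same critical exponent.**
For any Borel measure `σ` on `(0,∞)` and any `u ∈ 𝔇₁` with `h_u < ∞` and `u ≺ Id`,
there is `u̲ ∈ 𝔇₁` with `u ≺ u̲` and `h_{u̲} ≤ h_u`. -/
theorem exists_faster_gauge_le_exponent
    (σ : Measure ℝ) (hσ : σ (Iic (0:ℝ)) = 0)
    (u : ℝ → ℝ) (hu : IsGauge1 u) (huid : GaugePrec u (fun r => r))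
    (hufin : hGaugeRaw σ u < ∞) :
    ∃ ul : ℝ → ℝ, IsGauge1 ul ∧ GaugePrec u ul ∧ hGaugeRaw σ ul ≤ hGaugeRaw σ u :=
  exists_faster_gauge_le_exponent_general σ u hu huid hufin

end LevyFractal
end
end

section
/- Let w ∈ 𝔚, let w̃ be a continuous increasing function on [0,∞) tending to infinity at infinity and coinciding with w near 0, and let κ₁ > 1 and δ₀ > 0 be such that κ₁ w̃(δ) ≤ w̃(2δ) for all δ ∈ [0,δ₀]. For q ∈ ℕ set φ_q(r) = w̃^{−1}(r/κ₁^q) and F̃_w = (∩_{q≥1} L_{φ_q}) ∖ S. Then, with probability one, F̃_w ⊆ F_w; that is, at every t ∈ F̃_w the function w is not a modulus of continuity of X. -/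
open MeasureTheory Filter Set Topology
open scoped ENNReal NNReal Classical

noncomputable section

namespace LevyFractal

/-! ### Lévy processes -/

variable {d : ℕ}

variable {Ω : Type*} [MeasurableSpace Ω]

/-! If `w` were a modulus of continuity at `t ∉ S`, say `‖X_u - P(u - t)‖ ≤ c w(|u - t|)` near
`t`, then passing to left limits bounds every jump at a time `s` near `t` by `2c w(|s - t|)`.
But `t ∈ L_{φ_q}` provides jump times `s` arbitrarily close to `t` with
`κ₁^q w(|t - s|) < ‖ΔX_s‖`, and `κ₁^q` eventually exceeds `2c`. -/

variable {d : ℕ} {Ω : Type*} [MeasurableSpace Ω] {P : Measure Ω}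
  {X : ℝ → Ω → (Fin d → ℝ)} {a : Fin d → ℝ} {Q : (Fin d → ℝ) → (Fin d → ℝ) → ℝ}
  {π : Measure (Fin d → ℝ)}

theorem _root_.StrictMonoOn.lt_of_lt_of_leftInvOn {α β : Type*} [Preorder α] [Preorder β]
    {f : α → β} {g : β → α} {s : Set α} (hf : StrictMonoOn f s) (hg : LeftInvOn g f s)
    {x : α} {y : β} (hx : x ∈ s) (hy : y ∈ f '' s) (h : x < g y) : f x < y := by
  obtain ⟨z, hz, rfl⟩ := hy
  rw [hg hz] at h
  exact hf hx hz h

theorem norm_sub_leftLim_le_two_mul {E : Type*} [NormedAddCommGroup E] {f g : ℝ → E}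
    {b : ℝ → ℝ} {s : ℝ} {L : E} (hf : Tendsto f (𝓝[<] s) (𝓝 L)) (hg : ContinuousAt g s)
    (hb : ContinuousAt b s) (h : ∀ᶠ u in 𝓝 s, ‖f u - g u‖ ≤ b u) :
    ‖f s - Function.leftLim f s‖ ≤ 2 * b s := by
  have hL : ‖L - g s‖ ≤ b s :=
    le_of_tendsto_of_tendsto (hf.sub (hg.tendsto.mono_left nhdsWithin_le_nhds)).norm
      (hb.tendsto.mono_left nhdsWithin_le_nhds) (h.filter_mono nhdsWithin_le_nhds)
  calc ‖f s - Function.leftLim f s‖ = ‖(f s - g s) - (L - g s)‖ := by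
        rw [leftLim_eq_of_tendsto hf, sub_sub_sub_cancel_right]
    _ ≤ ‖f s - g s‖ + ‖L - g s‖ := norm_sub_le _ _
    _ ≤ 2 * b s := by linarith [h.self_of_nhds]

omit [MeasurableSpace Ω] in
theorem IsPtwiseModulusAt.exists_norm_jump_le {ω : Ω} {w : ℝ → ℝ} {t ε : ℝ} (hε : 0 < ε)
    (hw : ContinuousOn w (Icc 0 ε))
    (hX : ∀ s : ℝ, 0 < s → ∃ L, Tendsto (fun u => X u ω) (𝓝[<] s) (𝓝 L))
    (h : IsPtwiseModulusAt X ω w t) :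
    ∃ C, ∃ η > 0, ∀ s, 0 < s → s ≠ t → |s - t| < η → ‖jump X ω s‖ ≤ C * w |s - t| := by
  obtain ⟨c, -, p, δ, hδ, hbound⟩ := h
  refine ⟨2 * c, min δ ε, lt_min hδ hε, fun s hs hst hsη => ?_⟩
  obtain ⟨L, hL⟩ := hX s hs
  have hwc : ContinuousAt w |s - t| :=
    hw.continuousAt (Icc_mem_nhds (abs_pos.2 (sub_ne_zero.2 hst))
      (hsη.trans_le (min_le_right _ _)))
  have hnear : ∀ᶠ u in 𝓝 s, 0 < u ∧ |u - t| < δ :=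
    (lt_mem_nhds hs).and ((isOpen_lt (by fun_prop) continuous_const).mem_nhds
      (hsη.trans_le (min_le_left _ _)))
  rw [mul_assoc]
  refine norm_sub_leftLim_le_two_mul (g := fun u i => (p i).eval (u - t)) hL (by fun_prop)
    (continuousAt_const.mul (hwc.comp (f := fun u => |u - t|) (by fun_prop))) ?_
  exact hnear.mono fun u hu => hbound u hu.1.le hu.2.le

omit [MeasurableSpace Ω] in
theorem exists_mem_smallJumpTimes_of_mem_Lset {ω : Ω} {t κ : ℝ} {wt wtinv : ℝ → ℝ}
    (hκ : 0 < κ) (hwt : StrictMonoOn wt (Ici 0)) (hwtinv : LeftInvOn wtinv wt (Ici 0))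
    (hsurj : Ici 0 ⊆ wt '' Ici 0) (ht : t ∈ Lset X ω (fun r => wtinv (r / κ))) :
    ∃ s ∈ smallJumpTimes X ω, κ * wt |t - s| < ‖jump X ω s‖ := by
  obtain ⟨s, hs, hts⟩ := ht.2.nonempty
  refine ⟨s, hs, ?_⟩
  rw [← lt_div_iff₀' hκ]
  exact hwt.lt_of_lt_of_leftInvOn hwtinv (mem_Ici.2 (abs_nonneg _))
    (hsurj (div_nonneg (norm_nonneg _) hκ.le)) hts

omit [MeasurableSpace Ω] in
theorem exists_large_jump_near_of_forall_mem_Lset {ω : Ω} {t κ C η : ℝ} {wt wtinv : ℝ → ℝ}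
    (hκ : 1 < κ) (hη : 0 < η) (hwt0 : wt 0 = 0) (hwt : StrictMonoOn wt (Ici 0))
    (hwtinv : LeftInvOn wtinv wt (Ici 0)) (hsurj : Ici 0 ⊆ wt '' Ici 0)
    (ht : ∀ q : ℕ, 1 ≤ q → t ∈ Lset X ω (fun r => wtinv (r / κ ^ q))) :
    ∃ s ∈ jumpTimes X ω, |t - s| < η ∧ C * wt |t - s| < ‖jump X ω s‖ := by
  have hwtη : 0 < wt η := hwt0 ▸ hwt self_mem_Ici (mem_Ici.2 hη.le) hη
  have hpow := tendsto_pow_atTop_atTop_of_one_lt hκ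
  obtain ⟨q, ⟨hCq, hq⟩, hq1⟩ := ((hpow.eventually_ge_atTop C).and
    ((hpow.atTop_mul_const hwtη).eventually_ge_atTop 1)).and (eventually_ge_atTop 1) |>.exists
  have hκq_pos : 0 < κ ^ q := pow_pos (one_pos.trans hκ) q
  obtain ⟨s, ⟨hsS, hs1⟩, hs⟩ :=
    exists_mem_smallJumpTimes_of_mem_Lset hκq_pos hwt hwtinv hsurj (ht q hq1)
  have hts : |t - s| ∈ Ici 0 := mem_Ici.2 (abs_nonneg _)
  refine ⟨s, hsS, ?_, ?_⟩
  · -- `κ^q wt |t - s| < ‖ΔX_s‖ ≤ 1 ≤ κ^q wt η`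
    refine (hwt.lt_iff_lt hts (mem_Ici.2 hη.le)).1 (lt_of_mul_lt_mul_left ?_ hκq_pos.le)
    linarith
  · calc C * wt |t - s| ≤ κ ^ q * wt |t - s| :=
          mul_le_mul_of_nonneg_right hCq (hwt0 ▸ hwt.monotoneOn self_mem_Ici hts hts)
      _ < ‖jump X ω s‖ := hs

theorem levy_aux_set_subset_bad_modulus_set_general
    (hX : IsLevyProcess P X a Q π)
    (w : ℝ → ℝ) (hw : IsModulus w)
    (wt : ℝ → ℝ) (hwtc : ContinuousOn wt (Ici (0:ℝ)))
    (hwtm : StrictMonoOn wt (Ici (0:ℝ))) (hwttop : Tendsto wt atTop atTop)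
    (hwteq : ∃ ε > 0, EqOn w wt (Icc (0:ℝ) ε))
    (wtinv : ℝ → ℝ) (hwtinv : ∀ x ∈ Ici (0:ℝ), wtinv (wt x) = x)
    (κ₁ : ℝ) (hκ₁ : 1 < κ₁) :
    ∀ᵐ ω ∂P,
      (⋂ (q : ℕ) (_ : 1 ≤ q), Lset X ω (fun r => wtinv (r / κ₁ ^ q)))
          \ jumpTimes X ω ⊆ badModulusSet X ω w := by
  filter_upwards [hX.cadlag] with ω hω
  rintro t ⟨htL, htS⟩
  simp only [mem_iInter] at htL
  refine ⟨(htL 1 le_rfl).1, htS, fun hmod => ?_⟩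
  obtain ⟨ε, hε, -, hwc⟩ := hw.2.1
  obtain ⟨C, η, hη, hsmall⟩ := hmod.exists_norm_jump_le hε hwc hω.2
  obtain ⟨ε', hε', hweq⟩ := hwteq
  have hwt0 : wt 0 = 0 := (hweq ⟨le_rfl, hε'.le⟩).symm.trans hw.1
  have hsurj : Ici 0 ⊆ wt '' Ici 0 := by
    simpa only [hwt0] using isPreconnected_Ici.intermediate_value_Ici
      self_mem_Ici (le_principal_iff.2 (Ici_mem_atTop 0)) hwtc hwttop
  obtain ⟨s, hsS, hts, hlarge⟩ := exists_large_jump_near_of_forall_mem_Lset (C := C)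
    hκ₁ (lt_min hη hε') hwt0 hwtm hwtinv hsurj htL
  have hjump := hsmall s hsS.1 (fun h => htS (h ▸ hsS))
    (abs_sub_comm s t ▸ hts.trans_le (min_le_left _ _))
  rw [abs_sub_comm, hweq ⟨abs_nonneg _, (hts.trans_le (min_le_right _ _)).le⟩] at hjump
  exact hlarge.not_ge hjump

/-- **Lemma (the auxiliary set `F̃_w` consists of times where `w` fails to be a modulus
of continuity).** With probability one, `F̃_w = (∩_{q ≥ 1} L_{φ_q}) ∖ S ⊆ F_w`, where
`φ_q(r) = w̃⁻¹(r / κ₁^q)`. -/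
theorem levy_aux_set_subset_bad_modulus_set
    (hX : IsLevyProcess P X a Q π)
    (w : ℝ → ℝ) (hw : IsModulus w)
    (wt : ℝ → ℝ) (hwtc : ContinuousOn wt (Ici (0:ℝ)))
    (hwtm : StrictMonoOn wt (Ici (0:ℝ))) (hwttop : Tendsto wt atTop atTop)
    (hwteq : ∃ ε > 0, EqOn w wt (Icc (0:ℝ) ε))
    (wtinv : ℝ → ℝ) (hwtinv : ∀ x ∈ Ici (0:ℝ), wtinv (wt x) = x)
    (κ₁ : ℝ) (hκ₁ : 1 < κ₁) (δ₀ : ℝ) (hδ₀ : 0 < δ₀)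
    (hκ : ∀ δ ∈ Icc (0:ℝ) δ₀, κ₁ * wt δ ≤ wt (2 * δ)) :
    ∀ᵐ ω ∂P,
      (⋂ (q : ℕ) (_ : 1 ≤ q), Lset X ω (fun r => wtinv (r / κ₁ ^ q)))
          \ jumpTimes X ω ⊆ badModulusSet X ω w :=
  levy_aux_set_subset_bad_modulus_set_general hX w hw wt hwtc hwtm hwttop hwteq wtinv hwtinv κ₁ hκ₁

end LevyFractal
end
end
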